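/- arXiv:2305.08966 — 2 statements merged into one kernel-verified Lean document; each statement's English description precedes it below -/
import Mathlib

section
/- For every odd natural number k ≥ 1, there exist rational numbers c and d such that I_k = ∫₀^{π/2} x·cos^k(x) dx = c·π + d. -/
/-! Integration by parts gives the recurrence `(n + 2) I_{n+2} = (n + 1) I_n - 1 / (n + 2)`, whose
coefficients are rational; starting from `I_1 = π / 2 - 1`, every odd-index integral is therefore a
rational combination of `π` and `1`. -/

open Real intervalIntegral

noncomputable def cosPowMoment (k : ℕ) : ℝ := ∫ x in (0:ℝ)..(π/2), x * cos x ^ k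

lemma intervalIntegrable_mul_cos_pow (n : ℕ) (a b : ℝ) :
    IntervalIntegrable (fun x : ℝ => x * cos x ^ n) MeasureTheory.volume a b :=
  (by fun_prop : Continuous fun x : ℝ => x * cos x ^ n).intervalIntegrable a b

/-- Integration by parts of `x cos^(n+1) x · cos x` together with `sin² = 1 - cos²`,
packaged as an antiderivative. -/
lemma hasDerivAt_mul_cos_pow_mul_sin_add_cos_pow (n : ℕ) (x : ℝ) :
    HasDerivAt (fun x : ℝ => x * cos x ^ (n + 1) * sin x + cos x ^ (n + 2) / (n + 2))
      ((n + 2) * (x * cos x ^ (n + 2)) - (n + 1) * (x * cos x ^ n)) x := by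
  have H := (((hasDerivAt_id x).mul ((hasDerivAt_cos x).pow (n + 1))).mul
      (hasDerivAt_sin x)).add (((hasDerivAt_cos x).pow (n + 2)).div_const ((n + 2 : ℝ)))
  refine H.congr_deriv ?_
  simp only [id_eq, Pi.pow_apply, Pi.mul_apply, Nat.add_sub_cancel]
  push_cast
  field_simp
  linear_combination (-(n + 1) * x * cos x ^ n) * sin_sq_add_cos_sq x

lemma cosPowMoment_add_two (n : ℕ) :
    (n + 2) * cosPowMoment (n + 2) = (n + 1) * cosPowMoment n - 1 / (n + 2) := by
  have h := integral_eq_sub_of_hasDerivAt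
    (fun x _ => hasDerivAt_mul_cos_pow_mul_sin_add_cos_pow n x)
    (((intervalIntegrable_mul_cos_pow _ 0 (π / 2)).const_mul _).sub
      ((intervalIntegrable_mul_cos_pow _ 0 (π / 2)).const_mul _))
  rw [integral_sub ((intervalIntegrable_mul_cos_pow _ _ _).const_mul _)
    ((intervalIntegrable_mul_cos_pow _ _ _).const_mul _), integral_const_mul,
    integral_const_mul] at h
  simp only [cos_pi_div_two, sin_pi_div_two, cos_zero, sin_zero] at h
  unfold cosPowMoment
  linear_combination h

lemma cosPowMoment_one : cosPowMoment 1 = π / 2 - 1 := by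
  have hderiv (x : ℝ) : HasDerivAt (fun x : ℝ => x * sin x + cos x) (x * cos x ^ 1) x := by
    refine (((hasDerivAt_id x).mul (hasDerivAt_sin x)).add (hasDerivAt_cos x)).congr_deriv ?_
    simp only [id_eq, pow_one, one_mul]
    ring
  rw [cosPowMoment, integral_eq_sub_of_hasDerivAt (fun x _ => hderiv x)
    (intervalIntegrable_mul_cos_pow _ _ _)]
  simp

lemma exists_rat_cosPowMoment_two_mul_add_one (m : ℕ) :
    ∃ c d : ℚ, cosPowMoment (2 * m + 1) = c * π + d := by
  induction m with
  | zero => exact ⟨1 / 2, -1, by rw [cosPowMoment_one]; push_cast; ring⟩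
  | succ n ih =>
    obtain ⟨c, d, hcd⟩ := ih
    refine ⟨(2 * n + 2) / (2 * n + 3) * c, ((2 * n + 2) * d - 1 / (2 * n + 3)) / (2 * n + 3), ?_⟩
    have hrec := cosPowMoment_add_two (2 * n + 1)
    rw [hcd] at hrec
    rw [show 2 * (n + 1) + 1 = 2 * n + 1 + 2 by ring, ← mul_div_cancel_left₀
      (cosPowMoment (2 * n + 1 + 2)) (by positivity : ((2 * n + 1 : ℕ) + 2 : ℝ) ≠ 0), hrec]
    push_cast
    ring

theorem stmt_3 (k : ℕ) (hk : Odd k) :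
    ∃ c d : ℚ, ∫ x in (0:ℝ)..(π/2), x * cos x ^ k = (c:ℝ) * π + (d:ℝ) := by
  obtain ⟨m, rfl⟩ := hk
  exact exists_rat_cosPowMoment_two_mul_add_one m
end

section
/- For all natural numbers n ≥ 1 and k ≥ 2n, the integral I_k = ∫₀^{π/2} x·cos^k(x) dx satisfies I_k = I_{k−2n} · ∏_{j=0}^{n−1} (k−2j−1)/(k−2j) − ( 1/k² + ∑_{i=1}^{n−1} (1/(k−2i)²) · ∏_{j=0}^{i−1} (k−2j−1)/(k−2j) ), where the sum ∑_{i=1}^{0} is taken to be zero. -/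
/-!
Integrating `x * cos x ^ (m + 2)` by parts against `cos x ^ (m + 1) * sin x`, whose derivative is
`(m + 2) * cos x ^ (m + 2) - (m + 1) * cos x ^ m`, and using `∫ sin x * cos x ^ m = 1 / (m + 1)`
gives the two-step recurrence `I (m + 2) = (m + 1) / (m + 2) * I m - 1 / (m + 2) ^ 2`.
Unrolling it `n` times yields the formula.
-/

open Real

theorem eq_mul_prod_sub_sum_of_recurrence (a : ℕ → ℝ)
    (hrec : ∀ m : ℕ, a (m + 2) = (m + 1) / (m + 2) * a m - 1 / (m + 2) ^ 2)
    (n k : ℕ) (hn : 1 ≤ n) (hk : 2 * n ≤ k) :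
    a k = a (k - 2 * n) * (∏ j ∈ Finset.range n, ((k:ℝ) - 2*j - 1) / ((k:ℝ) - 2*j)) -
      (1 / (k:ℝ)^2 + ∑ i ∈ Finset.Icc 1 (n - 1),
          (1 / ((k:ℝ) - 2*i)^2) * ∏ j ∈ Finset.range i, ((k:ℝ) - 2*j - 1) / ((k:ℝ) - 2*j)) := by
  induction n, hn using Nat.le_induction with
  | base =>
    obtain ⟨m, rfl⟩ : ∃ m, k = m + 2 := ⟨k - 2, by omega⟩
    rw [hrec m, Nat.add_sub_cancel, Nat.sub_self, Finset.prod_range_one,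
      Finset.Icc_eq_empty_of_lt zero_lt_one, Finset.sum_empty]
    push_cast
    ring
  | succ n hn ih =>
    obtain ⟨m, rfl⟩ : ∃ m, k = m + 2 * (n + 1) := ⟨k - 2 * (n + 1), by omega⟩
    obtain ⟨n, rfl⟩ : ∃ n', n = n' + 1 := ⟨n - 1, by omega⟩
    have hsub : m + 2 * (n + 1 + 1) - 2 * (n + 1) = m + 2 := by omega
    rw [ih (by omega), hsub, hrec m, Nat.add_sub_cancel, Nat.add_sub_cancel, Nat.add_sub_cancel,
      Finset.sum_Icc_succ_top (by omega : 1 ≤ n + 1), Finset.prod_range_succ _ (n + 1)]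
    push_cast
    ring

theorem hasDerivAt_cos_pow_succ_mul_sin (n : ℕ) (x : ℝ) :
    HasDerivAt (fun x => cos x ^ (n + 1) * sin x)
      ((n + 2) * cos x ^ (n + 2) - (n + 1) * cos x ^ n) x := by
  refine (((hasDerivAt_cos x).fun_pow (n + 1)).mul (hasDerivAt_sin x)).congr_deriv ?_
  rw [Nat.add_sub_cancel]
  push_cast
  linear_combination -((n:ℝ) + 1) * cos x ^ n * Real.sin_sq_add_cos_sq x

theorem integral_sin_mul_cos_pow_zero_pi_div_two (n : ℕ) :
    (∫ x in (0:ℝ)..(π/2), sin x * cos x ^ n) = 1 / (n + 1) := by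
  simpa [integral_pow] using integral_sin_pow_odd_mul_cos_pow (a := 0) (b := π/2) 0 n

theorem integral_mul_cos_pow_add_two (n : ℕ) :
    (∫ x in (0:ℝ)..(π/2), x * cos x ^ (n + 2)) =
      (n + 1) / (n + 2) * (∫ x in (0:ℝ)..(π/2), x * cos x ^ n) - 1 / (n + 2) ^ 2 := by
  have hparts := intervalIntegral.integral_mul_deriv_eq_deriv_mul (a := 0) (b := π/2)
    (fun x _ => hasDerivAt_id x) (fun x _ => hasDerivAt_cos_pow_succ_mul_sin n x)
    intervalIntegrable_const (Continuous.intervalIntegrable (by fun_prop) _ _)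
  have hlin : ∫ x in (0:ℝ)..(π/2), x * ((n + 2) * cos x ^ (n + 2) - (n + 1) * cos x ^ n) =
      (n + 2) * (∫ x in (0:ℝ)..(π/2), x * cos x ^ (n + 2))
        - (n + 1) * ∫ x in (0:ℝ)..(π/2), x * cos x ^ n := by
    simp_rw [mul_sub, mul_left_comm _ ((n:ℝ) + _)]
    rw [intervalIntegral.integral_sub, intervalIntegral.integral_const_mul,
      intervalIntegral.integral_const_mul] <;>
    exact Continuous.intervalIntegrable (by fun_prop) _ _
  simp only [id, one_mul, cos_pi_div_two, zero_pow n.succ_ne_zero, zero_mul, mul_zero, sub_zero,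
    mul_comm (cos _ ^ _) (sin _), integral_sin_mul_cos_pow_zero_pi_div_two, hlin] at hparts
  rw [Nat.cast_succ, add_assoc, one_add_one_eq_two] at hparts
  field_simp at hparts ⊢
  linear_combination hparts

theorem stmt_4 (n k : ℕ) (hn : 1 ≤ n) (hk : 2 * n ≤ k) :
    ∫ x in (0:ℝ)..(π/2), x * cos x ^ k =
      (∫ x in (0:ℝ)..(π/2), x * cos x ^ (k - 2 * n)) *
        (∏ j ∈ Finset.range n, ((k:ℝ) - 2*j - 1) / ((k:ℝ) - 2*j)) -
      (1 / (k:ℝ)^2 +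
        ∑ i ∈ Finset.Icc 1 (n - 1),
          (1 / ((k:ℝ) - 2*i)^2) *
            ∏ j ∈ Finset.range i, ((k:ℝ) - 2*j - 1) / ((k:ℝ) - 2*j)) :=
  eq_mul_prod_sub_sum_of_recurrence (fun k => ∫ x in (0:ℝ)..(π/2), x * cos x ^ k)
    integral_mul_cos_pow_add_two n k hn hk
end
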